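/- arXiv:2305.11607 — 4 statements merged into one kernel-verified Lean document; each statement's English description precedes it below -/
import Mathlib

section
/- The theta graph θ_{2,2,2} (equivalently K_{2,3}) is 2-choosable: for every assignment of lists of size 2 to the vertices of K_{2,3}, there exists a proper coloring choosing each vertex's color from its list. -/
/-- A graph `G` is `L`-colorable: there is a proper coloring choosing each
vertex's color from its list. -/
def ListColorable {V : Type*} (G : SimpleGraph V) (L : V → Finset ℕ) : Prop :=
  ∃ f : V → ℕ, (∀ v, f v ∈ L v) ∧ ∀ ⦃u v⦄, G.Adj u v → f u ≠ f v

/-- A graph is `k`-choosable if it is `L`-colorable for every list assignment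
with all lists of size `k`. -/
def Choosable {V : Type*} (G : SimpleGraph V) (k : ℕ) : Prop :=
  ∀ L : V → Finset ℕ, (∀ v, (L v).card = k) → ListColorable G L

/-!
Color the two vertices of the small side with `a ∈ L u` and `b ∈ L v`; every vertex `w` of the
other side can then avoid both colors unless `L w = {a, b}`. If `L u` and `L v` meet, take
`a = b`. Otherwise the four choices give four distinct pairs `{a, b}`, while there are at most
three lists on the other side, so some choice is a pair that is no list.
-/

open Finset

namespace Finset

variable {α : Type*} [DecidableEq α]

lemma exists_mem_notMem_pair_of_card_eq_two {s : Finset α} (hs : #s = 2) {a b : α}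
    (h : s ≠ {a, b}) : ∃ x ∈ s, x ∉ ({a, b} : Finset α) := by
  by_contra! hsub
  exact h (eq_of_subset_of_card_le hsub (card_le_two.trans hs.ge))

lemma injOn_pair_of_disjoint {A B : Finset α} (hAB : Disjoint A B) :
    Set.InjOn (fun p : α × α => ({p.1, p.2} : Finset α)) ↑(A ×ˢ B) := by
  rintro ⟨a, b⟩ hab ⟨a', b'⟩ hab' (heq : ({a, b} : Finset α) = {a', b'})
  simp only [coe_product, Set.mem_prod, mem_coe] at hab hab'
  have ha : a ∈ ({a', b'} : Finset α) := heq ▸ mem_insert_self a {b}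
  have hb : b ∈ ({a', b'} : Finset α) := heq ▸ mem_insert_of_mem (mem_singleton_self b)
  simp only [mem_insert, mem_singleton] at ha hb
  have ha' : a = a' := ha.resolve_right fun h => disjoint_left.mp hAB hab.1 (h ▸ hab'.2)
  have hb' : b = b' := hb.resolve_left fun h => disjoint_left.mp hAB hab'.1 (h ▸ hab.2)
  rw [ha', hb']

lemma exists_pair_notMem_of_card_le_three {A B : Finset α} (hA : #A = 2) (hB : #B = 2)
    {M : Finset (Finset α)} (hM : ∀ s ∈ M, #s = 2) (hMcard : #M ≤ 3) :
    ∃ a ∈ A, ∃ b ∈ B, ({a, b} : Finset α) ∉ M := by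
  by_cases hAB : Disjoint A B
  · have hpairs : #((A ×ˢ B).image fun p => ({p.1, p.2} : Finset α)) = 4 := by
      rw [card_image_of_injOn (injOn_pair_of_disjoint hAB), card_product, hA, hB]
    obtain ⟨s, hs, hsM⟩ :=
      exists_mem_notMem_of_card_lt_card (hMcard.trans_lt (by omega) :
        #M < #((A ×ˢ B).image fun p => ({p.1, p.2} : Finset α)))
    obtain ⟨⟨a, b⟩, hab, rfl⟩ := mem_image.mp hs
    exact ⟨a, (mem_product.mp hab).1, b, (mem_product.mp hab).2, hsM⟩
  · obtain ⟨c, hcA, hcB⟩ := not_disjoint_iff.mp hAB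
    refine ⟨c, hcA, c, hcB, fun hc => ?_⟩
    simpa using hM _ hc

end Finset

lemma listColorable_completeBipartiteGraph {α β : Type*} {L : α ⊕ β → Finset ℕ}
    (f : α → ℕ) (g : β → ℕ) (hf : ∀ i, f i ∈ L (.inl i)) (hg : ∀ j, g j ∈ L (.inr j))
    (hfg : ∀ i j, f i ≠ g j) : ListColorable (completeBipartiteGraph α β) L := by
  refine ⟨Sum.elim f g, Sum.rec hf hg, ?_⟩
  rintro (i | j) (i' | j') hadj
  · simp at hadj
  · exact hfg i j'
  · exact (hfg i' j).symm
  · simp at hadj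

theorem completeBipartiteGraph_fin_two_choosable {β : Type*} [Fintype β]
    (hβ : Fintype.card β ≤ 3) : Choosable (completeBipartiteGraph (Fin 2) β) 2 := by
  intro L hL
  obtain ⟨a, ha, b, hb, hab⟩ := exists_pair_notMem_of_card_le_three (hL (.inl 0)) (hL (.inl 1))
    (M := univ.image (L ∘ .inr)) (by simp [hL]) (card_image_le.trans hβ)
  have havoid (j : β) : ∃ x ∈ L (.inr j), x ∉ ({a, b} : Finset ℕ) :=
    exists_mem_notMem_pair_of_card_eq_two (hL _) fun h =>
      hab (h ▸ mem_image_of_mem _ (mem_univ j))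
  choose g hg hgab using havoid
  exact listColorable_completeBipartiteGraph ![a, b] g (by simp [Fin.forall_fin_two, ha, hb]) hg
    fun i j h => hgab j (h ▸ by fin_cases i <;> simp)

theorem K23_two_choosable :
    Choosable (completeBipartiteGraph (Fin 2) (Fin 3)) 2 :=
  completeBipartiteGraph_fin_two_choosable (Fintype.card_fin 3).le
end

section
/- The theta graph θ_{3,3,3} is not 2-choosable: there exists an assignment of lists of size 2 to the vertices of θ_{3,3,3} admitting no proper coloring from the lists. -/
/-- The theta graph `θ₃,₃,₃`: vertices `0` and `1` joined by the three
internally disjoint paths `0-2-3-1`, `0-4-5-1`, `0-6-7-1`. -/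
def theta333 : SimpleGraph (Fin 8) :=
  SimpleGraph.fromRel (fun i j =>
    ((i : ℕ) = 0 ∧ (j : ℕ) = 2) ∨ ((i : ℕ) = 2 ∧ (j : ℕ) = 3) ∨
    ((i : ℕ) = 3 ∧ (j : ℕ) = 1) ∨ ((i : ℕ) = 0 ∧ (j : ℕ) = 4) ∨
    ((i : ℕ) = 4 ∧ (j : ℕ) = 5) ∨ ((i : ℕ) = 5 ∧ (j : ℕ) = 1) ∨
    ((i : ℕ) = 0 ∧ (j : ℕ) = 6) ∨ ((i : ℕ) = 6 ∧ (j : ℕ) = 7) ∨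
    ((i : ℕ) = 7 ∧ (j : ℕ) = 1))

lemma color_ne_of_path3_lists {V : Type*} {G : SimpleGraph V} {L : V → Finset ℕ} {f : V → ℕ}
    (hL : ∀ v, f v ∈ L v) (hf : ∀ ⦃u v⦄, G.Adj u v → f u ≠ f v) {u x y v : V}
    (hux : G.Adj u x) (hxy : G.Adj x y) (hyv : G.Adj y v) {a b c : ℕ}
    (hx : L x = {a, c}) (hy : L y = {c, b}) (hu : f u = a) : f v ≠ b := by
  have hxc : f x = c := by
    have := hL x
    rw [hx, Finset.mem_insert, Finset.mem_singleton] at this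
    exact this.resolve_left (hu ▸ (hf hux).symm)
  have hyb : f y = b := by
    have := hL y
    rw [hy, Finset.mem_insert, Finset.mem_singleton] at this
    exact this.resolve_left (hxc ▸ (hf hxy).symm)
  exact fun hvb => hf hyv (hyb.trans hvb.symm)

theorem theta333_not_two_choosable :
    ∃ L : Fin 8 → Finset ℕ, (∀ v, (L v).card = 2) ∧
      ¬ ListColorable theta333 L := by
  let L : Fin 8 → Finset ℕ := ![{0, 3}, {0, 3}, {3, 2}, {2, 0}, {0, 2}, {2, 3}, {0, 3}, {3, 0}]
  refine ⟨L, by decide, ?_⟩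
  rintro ⟨f, hL, hf⟩
  have h0 : f 0 = 0 ∨ f 0 = 3 := by simpa [L] using hL 0
  have h1 : f 1 = 0 ∨ f 1 = 3 := by simpa [L] using hL 1
  rcases h0 with h0 | h0 <;> rcases h1 with h1 | h1
  · refine color_ne_of_path3_lists hL hf (x := 6) (y := 7) ?_ ?_ ?_ rfl rfl h0 h1 <;>
      simp [theta333]
  · refine color_ne_of_path3_lists hL hf (x := 4) (y := 5) ?_ ?_ ?_ rfl rfl h0 h1 <;>
      simp [theta333]
  · refine color_ne_of_path3_lists hL hf (x := 2) (y := 3) ?_ ?_ ?_ rfl rfl h0 h1 <;>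
      simp [theta333]
  · refine color_ne_of_path3_lists hL hf (x := 6) (y := 7) ?_ ?_ ?_
      (Finset.pair_comm 0 3) (Finset.pair_comm 3 0) h0 h1 <;>
      simp [theta333]
end

section
/- The theta graph θ_{2,2,2m} is 2-choosable for every m ≥ 1: for any assignment of lists of size 2 to its vertices, there exists a proper coloring from the lists. -/
/-- The theta graph `θ₂,₂,₂ₘ`: vertices `0` and `1` joined by the internally
disjoint paths `0-2-1`, `0-3-1`, and `0-4-5-⋯-(2m+2)-1` of length `2m`. -/
def theta22 (m : ℕ) : SimpleGraph (Fin (2 * m + 3)) :=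
  SimpleGraph.fromRel (fun i j =>
    ((i : ℕ) = 0 ∧ (j : ℕ) = 2) ∨ ((i : ℕ) = 2 ∧ (j : ℕ) = 1) ∨
    ((i : ℕ) = 0 ∧ (j : ℕ) = 3) ∨ ((i : ℕ) = 3 ∧ (j : ℕ) = 1) ∨
    ((i : ℕ) = 0 ∧ (j : ℕ) = 4) ∨
    (4 ≤ (i : ℕ) ∧ (j : ℕ) = (i : ℕ) + 1) ∨
    ((i : ℕ) = 2 * m + 2 ∧ (j : ℕ) = 1))

/-!
Color the long path `u = p₀, …, p₂ₘ = v` first, with end colors `c` and `d`. The middle vertex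
of a short path can then be colored unless its list is exactly `{c, d}`, so it suffices to find a
coloring of the path whose end pair avoids the two lists `X`, `Y` of these middle vertices.

If some start color `c` reaches every color of `L(v)`, then `d = c` works when `c ∈ L(v)`; if
`c ∉ X`, of the two choices of `d` one avoids `Y`; and if `c ∈ X ∩ Y`, any coloring starting from
the other color of `L(u)` leaves `c` free for both middle vertices. Otherwise, following both
start colors one step at a time, they can only swap, so after the even number `2m` of steps each
start color is reachable at `v` again, and `c = d` works.
-/

section PathColoring

variable {α : Type*} {M : ℕ → Finset α} {n : ℕ} {X Y : Finset α} {a b c d e : α}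

def PathColorable (M : ℕ → Finset α) (n : ℕ) (c d : α) : Prop :=
  ∃ g : ℕ → α, g 0 = c ∧ g n = d ∧ (∀ i ≤ n, g i ∈ M i) ∧ ∀ i < n, g i ≠ g (i + 1)

namespace PathColorable

lemma mem_left (h : PathColorable M n c d) : c ∈ M 0 := by
  obtain ⟨g, rfl, -, hgM, -⟩ := h
  exact hgM 0 (Nat.zero_le n)

lemma mem_right (h : PathColorable M n c d) : d ∈ M n := by
  obtain ⟨g, -, rfl, hgM, -⟩ := h
  exact hgM n le_rfl

lemma zero (hc : c ∈ M 0) : PathColorable M 0 c c :=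
  ⟨fun _ => c, rfl, rfl, fun i hi => by rwa [Nat.le_zero.mp hi],
    fun i hi => absurd hi i.not_lt_zero⟩

lemma snoc (h : PathColorable M n c e) (hd : d ∈ M (n + 1)) (hed : e ≠ d) :
    PathColorable M (n + 1) c d := by
  obtain ⟨g, hg0, hgn, hgM, hg⟩ := h
  refine ⟨fun i => if i ≤ n then g i else d, by simpa using hg0, by simp, fun i hi => ?_,
    fun i hi => ?_⟩
  · by_cases hin : i ≤ n
    · simpa [hin] using hgM i hin
    · simpa [show i = n + 1 by omega, hin] using hd
  · rcases Nat.lt_succ_iff_lt_or_eq.mp hi with hin | rfl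
    · simpa [hin.le, Nat.succ_le_of_lt hin] using hg i hin
    · simpa [hgn] using hed

end PathColorable

lemma exists_pathColorable (hM : ∀ i, 1 < (M i).card) (hc : c ∈ M 0) :
    ∀ n, ∃ d, PathColorable M n c d
  | 0 => ⟨c, .zero hc⟩
  | n + 1 => by
    obtain ⟨e, he⟩ := exists_pathColorable hM hc n
    obtain ⟨d, hd, hde⟩ := Finset.exists_mem_ne (hM (n + 1)) e
    exact ⟨d, he.snoc hd hde.symm⟩

lemma pathColorable_succ_of_forall (hM : 1 < (M n).card)
    (hc : ∀ d ∈ M n, PathColorable M n c d) : ∀ d ∈ M (n + 1), PathColorable M (n + 1) c d := by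
  intro d hd
  obtain ⟨e, he, hed⟩ := Finset.exists_mem_ne hM d
  exact (hc e he).snoc hd hed

lemma pathColorable_succ_swap_or_forall (ha : PathColorable M n a c)
    (hb : PathColorable M n b d) (hcd : c ≠ d) :
    (∃ c', ∀ d' ∈ M (n + 1), PathColorable M (n + 1) c' d') ∨
      PathColorable M (n + 1) a d ∧ PathColorable M (n + 1) b c := by
  by_cases hcM : c ∈ M (n + 1)
  · by_cases hdM : d ∈ M (n + 1)
    · exact .inr ⟨ha.snoc hdM hcd, hb.snoc hcM hcd.symm⟩
    · exact .inl ⟨b, fun d' hd' => hb.snoc hd' fun h => hdM (h ▸ hd')⟩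
  · exact .inl ⟨a, fun d' hd' => ha.snoc hd' fun h => hcM (h ▸ hd')⟩

lemma pathColorable_even (hM : ∀ i, 1 < (M i).card) (ha : a ∈ M 0) (hb : b ∈ M 0)
    (hab : a ≠ b) : ∀ k, (∃ c, ∀ d ∈ M (2 * k), PathColorable M (2 * k) c d) ∨
      PathColorable M (2 * k) a a ∧ PathColorable M (2 * k) b b
  | 0 => .inr ⟨.zero ha, .zero hb⟩
  | k + 1 => by
    rcases pathColorable_even hM ha hb hab k with ⟨c, hc⟩ | ⟨haa, hbb⟩
    · exact .inl ⟨c, pathColorable_succ_of_forall (hM _) (pathColorable_succ_of_forall (hM _) hc)⟩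
    rcases pathColorable_succ_swap_or_forall haa hbb hab with ⟨c, hc⟩ | ⟨hab', hba'⟩
    · exact .inl ⟨c, pathColorable_succ_of_forall (hM _) hc⟩
    exact pathColorable_succ_swap_or_forall hab' hba' hab.symm

def Avoids (X : Finset α) (c d : α) : Prop :=
  ∃ x ∈ X, x ≠ c ∧ x ≠ d

lemma avoids_self (hX : 1 < X.card) (c : α) : Avoids X c c := by
  obtain ⟨x, hx, hxc⟩ := Finset.exists_mem_ne hX c
  exact ⟨x, hx, hxc, hxc⟩

lemma avoids_of_notMem (hX : 1 < X.card) (hcX : c ∉ X) (d : α) : Avoids X c d := by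
  obtain ⟨x, hx, hxd⟩ := Finset.exists_mem_ne hX d
  exact ⟨x, hx, fun h => hcX (h ▸ hx), hxd⟩

lemma exists_avoids_of_notMem {S : Finset α} (hS : 1 < S.card) (hX : 1 < X.card)
    (hY : 1 < Y.card) (hcY : c ∉ Y) : ∃ d ∈ S, Avoids X c d ∧ Avoids Y c d := by
  obtain ⟨d₁, hd₁, d₂, hd₂, hd₁₂⟩ := Finset.one_lt_card.mp hS
  obtain ⟨x, hx, hxc⟩ := Finset.exists_mem_ne hX c
  by_cases hxd₁ : x = d₁
  · exact ⟨d₂, hd₂, ⟨x, hx, hxc, hxd₁ ▸ hd₁₂⟩, avoids_of_notMem hY hcY d₂⟩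
  · exact ⟨d₁, hd₁, ⟨x, hx, hxc, hxd₁⟩, avoids_of_notMem hY hcY d₁⟩

lemma exists_pathColorable_avoids_of_forall (hM : ∀ i, 1 < (M i).card)
    (hc : ∀ d ∈ M n, PathColorable M n c d) (hX : 1 < X.card) (hY : 1 < Y.card) :
    ∃ c d, PathColorable M n c d ∧ Avoids X c d ∧ Avoids Y c d := by
  by_cases hcM : c ∈ M n
  · exact ⟨c, c, hc c hcM, avoids_self hX c, avoids_self hY c⟩
  by_cases hcXY : c ∈ X ∧ c ∈ Y
  · obtain ⟨c', hc', hc'c⟩ := Finset.exists_mem_ne (hM 0) c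
    obtain ⟨d', hd'⟩ := exists_pathColorable hM hc' n
    have hd'c : c ≠ d' := fun h => hcM (h ▸ hd'.mem_right)
    exact ⟨c', d', hd', ⟨c, hcXY.1, hc'c.symm, hd'c⟩, ⟨c, hcXY.2, hc'c.symm, hd'c⟩⟩
  obtain ⟨d, hd, hcd⟩ : ∃ d ∈ M n, Avoids X c d ∧ Avoids Y c d := by
    rcases not_and_or.mp hcXY with hcX | hcY
    · obtain ⟨d, hd, hXd, hYd⟩ := exists_avoids_of_notMem (hM n) hY hX hcX
      exact ⟨d, hd, hYd, hXd⟩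
    · exact exists_avoids_of_notMem (hM n) hX hY hcY
  exact ⟨c, d, hc d hd, hcd⟩

lemma exists_pathColorable_avoids (hM : ∀ i, 1 < (M i).card) (k : ℕ) (hX : 1 < X.card)
    (hY : 1 < Y.card) : ∃ c d, PathColorable M (2 * k) c d ∧ Avoids X c d ∧ Avoids Y c d := by
  obtain ⟨a, ha, b, hb, hab⟩ := Finset.one_lt_card.mp (hM 0)
  rcases pathColorable_even hM ha hb hab k with ⟨c, hc⟩ | ⟨haa, -⟩
  · exact exists_pathColorable_avoids_of_forall hM hc hX hY
  · exact ⟨a, a, haa, avoids_self hX a, avoids_self hY a⟩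

end PathColoring

namespace Theta22

variable {m : ℕ}

/-- `longPathVertex m i` is the `i`-th vertex of the long path `0, 4, 5, …, 2m+2, 1` of `theta22 m`;
`longPathIndex` inverts it away from the middle vertices `2` and `3` of the short paths. -/
def longPathVertex (m i : ℕ) : Fin (2 * m + 3) :=
  ⟨if i = 0 then 0 else if 2 * m ≤ i then 1 else i + 3, by split_ifs <;> omega⟩

def longPathIndex (m : ℕ) (v : Fin (2 * m + 3)) : ℕ :=
  if (v : ℕ) = 0 then 0 else if (v : ℕ) = 1 then 2 * m else v - 3

lemma longPathIndex_le (v : Fin (2 * m + 3)) : longPathIndex m v ≤ 2 * m := by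
  have := v.isLt
  unfold longPathIndex
  split_ifs <;> omega

lemma longPathVertex_longPathIndex (hm : 1 ≤ m) {v : Fin (2 * m + 3)} (h2 : (v : ℕ) ≠ 2)
    (h3 : (v : ℕ) ≠ 3) : longPathVertex m (longPathIndex m v) = v := by
  have := v.isLt
  ext
  unfold longPathVertex longPathIndex
  split_ifs <;> simp_all <;> omega

lemma adj_cases (hm : 1 ≤ m) {u v : Fin (2 * m + 3)} (h : (theta22 m).Adj u v) :
    ((u : ℕ) = 2 ∨ (u : ℕ) = 3) ∧ ((v : ℕ) = 0 ∨ (v : ℕ) = 1) ∨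
    ((v : ℕ) = 2 ∨ (v : ℕ) = 3) ∧ ((u : ℕ) = 0 ∨ (u : ℕ) = 1) ∨
    (u : ℕ) ≠ 2 ∧ (u : ℕ) ≠ 3 ∧ (v : ℕ) ≠ 2 ∧ (v : ℕ) ≠ 3 ∧
      (longPathIndex m v = longPathIndex m u + 1 ∨ longPathIndex m u = longPathIndex m v + 1) := by
  obtain ⟨-, h⟩ := (SimpleGraph.fromRel_adj _ _ _).mp h
  unfold longPathIndex
  split_ifs <;> omega

lemma listColorable_of_pathColorable (hm : 1 ≤ m) {L : Fin (2 * m + 3) → Finset ℕ} {c d : ℕ}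
    (hcd : PathColorable (fun i => L (longPathVertex m i)) (2 * m) c d)
    (hx : Avoids (L ⟨2, by omega⟩) c d) (hy : Avoids (L ⟨3, by omega⟩) c d) :
    ListColorable (theta22 m) L := by
  obtain ⟨g, rfl, rfl, hgL, hg⟩ := hcd
  obtain ⟨x, hxL, hxc, hxd⟩ := hx
  obtain ⟨y, hyL, hyc, hyd⟩ := hy
  let f : Fin (2 * m + 3) → ℕ := fun v =>
    if (v : ℕ) = 2 then x else if (v : ℕ) = 3 then y else g (longPathIndex m v)
  have hf : ∀ v : Fin (2 * m + 3), (v : ℕ) ≠ 2 → (v : ℕ) ≠ 3 → f v = g (longPathIndex m v) :=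
    fun v h2 h3 => by simp [f, h2, h3]
  have hmid : ∀ u v : Fin (2 * m + 3), ((u : ℕ) = 2 ∨ (u : ℕ) = 3) → ((v : ℕ) = 0 ∨ (v : ℕ) = 1) →
      f u ≠ f v := by
    intro u v hu hv
    rw [hf v (by omega) (by omega)]
    rcases hu with hu | hu <;> rcases hv with hv | hv <;>
      simp [f, hu, hv, longPathIndex, hxc, hxd, hyc, hyd]
  refine ⟨f, fun v => ?_, fun u v huv => ?_⟩
  · by_cases h2 : (v : ℕ) = 2
    · simpa [f, h2, show v = ⟨2, by omega⟩ from Fin.ext h2] using hxL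
    by_cases h3 : (v : ℕ) = 3
    · simpa [f, h3, show v = ⟨3, by omega⟩ from Fin.ext h3] using hyL
    rw [hf v h2 h3, ← congrArg L (longPathVertex_longPathIndex hm h2 h3)]
    exact hgL _ (longPathIndex_le v)
  rcases adj_cases hm huv with ⟨hu, hv⟩ | ⟨hv, hu⟩ | ⟨hu2, hu3, hv2, hv3, huv' | huv'⟩
  · exact hmid u v hu hv
  · exact (hmid v u hv hu).symm
  · rw [hf u hu2 hu3, hf v hv2 hv3, huv']
    exact hg _ (by have := longPathIndex_le v; omega)
  · rw [hf u hu2 hu3, hf v hv2 hv3, huv']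
    exact (hg _ (by have := longPathIndex_le u; omega)).symm

end Theta22

theorem theta22_two_choosable (m : ℕ) (hm : 1 ≤ m) :
    Choosable (theta22 m) 2 := by
  intro L hL
  have hL' : ∀ v, 1 < (L v).card := fun v => by simp [hL v]
  obtain ⟨c, d, hcd, hx, hy⟩ :=
    exists_pathColorable_avoids (fun i => hL' (Theta22.longPathVertex m i)) m (hL' _) (hL' _)
  exact Theta22.listColorable_of_pathColorable hm hcd hx hy
end

section
/- The graph consisting of two even cycles sharing exactly one common vertex is not 2-choosable. -/
/-- Two even cycles `C_{2a}` and `C_{2b}` sharing exactly the vertex `0`: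
the cycle `0-1-⋯-(2a-1)-0` and the cycle `0-(2a)-(2a+1)-⋯-(2a+2b-2)-0`. -/
def twoEvenCycles (a b : ℕ) : SimpleGraph (Fin (2 * a + 2 * b - 1)) :=
  SimpleGraph.fromRel (fun i j =>
    ((i : ℕ) + 1 = (j : ℕ) ∧ 1 ≤ (j : ℕ) ∧ (j : ℕ) ≤ 2 * a - 1) ∨
    ((i : ℕ) = 2 * a - 1 ∧ (j : ℕ) = 0) ∨
    ((i : ℕ) = 0 ∧ (j : ℕ) = 2 * a) ∨
    ((i : ℕ) + 1 = (j : ℕ) ∧ 2 * a + 1 ≤ (j : ℕ) ∧ (j : ℕ) ≤ 2 * a + 2 * b - 2) ∨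
    ((i : ℕ) = 2 * a + 2 * b - 2 ∧ (j : ℕ) = 0))

/-!
Give vertex `0` the list `{1, 2}`. Along the first cycle `0, 1, …, 2a-1` take the lists
`{1, 2}, {2, 3}, …, {2, 3}, {1, 3}`: colour `1` at `0` forces `2` at vertex `1`, the colours then
alternate between `2` and `3`, an odd number of steps brings `3` to vertex `2a-2`, and nothing is
left for `2a-1`, whose neighbours carry `1` and `3`. The second cycle, with the colours `1` and `2`
exchanged, rules out colour `2` at `0` in the same way.
-/

namespace SimpleGraph

variable {V : Type*} {G : SimpleGraph V} {f : V → ℕ}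

theorem color_eq_iff_even_of_path (hf : ∀ ⦃u v⦄, G.Adj u v → f u ≠ f v) {x y : ℕ}
    {p : ℕ → V} {n : ℕ} (hp : ∀ i < n, G.Adj (p i) (p (i + 1)))
    (hxy : ∀ i ≤ n, f (p i) ∈ ({x, y} : Finset ℕ)) :
    f (p n) = f (p 0) ↔ Even n := by
  induction n with
  | zero => simp
  | succ n ih =>
    have ih := ih (fun i hi => hp i (by omega)) (fun i hi => hxy i (by omega))
    have hstep := hf (hp n (by omega))
    have h0 := hxy 0 (by omega)
    have hn := hxy n (by omega)
    have hn1 := hxy (n + 1) le_rfl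
    simp only [Finset.mem_insert, Finset.mem_singleton] at h0 hn hn1
    rw [Nat.even_add_one, ← ih]
    omega

/-- The lists on the path `p 0, …, p (2k)` of an even cycle `z, p 0, …, p (2k), z` that
forbid the colour `c` at `z`. -/
def pathBlockingLists (c x y k i : ℕ) : Finset ℕ :=
  if i = 0 then {c, x} else if i < 2 * k then {x, y} else {c, y}

theorem color_ne_of_pathBlockingLists (hf : ∀ ⦃u v⦄, G.Adj u v → f u ≠ f v) {z : V}
    {p : ℕ → V} {c x y k : ℕ} (hk : 0 < k) (hp : ∀ i < 2 * k, G.Adj (p i) (p (i + 1)))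
    (hzp : G.Adj z (p 0)) (hpz : G.Adj (p (2 * k)) z)
    (hL : ∀ i ≤ 2 * k, f (p i) ∈ pathBlockingLists c x y k i) : f z ≠ c := by
  intro hz
  have hstart : f (p 0) = x := by
    have := hL 0 (by omega)
    simp only [pathBlockingLists, if_pos, Finset.mem_insert, Finset.mem_singleton] at this
    have := hf hzp
    omega
  have hpen : f (p (2 * k - 1)) = y := by
    have halt := color_eq_iff_even_of_path hf (x := x) (y := y) (n := 2 * k - 1)
      (fun i hi => hp i (by omega)) fun i hi => by
        rcases Nat.eq_zero_or_pos i with rfl | hi0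
        · simp [hstart]
        · simpa [pathBlockingLists, hi0.ne', show i < 2 * k by omega] using hL i (by omega)
    have hodd : ¬Even (2 * k - 1) := by rw [Nat.not_even_iff_odd]; exact ⟨k - 1, by omega⟩
    have := hL (2 * k - 1) (by omega)
    simp only [pathBlockingLists, show 2 * k - 1 ≠ 0 by omega, if_false,
      show 2 * k - 1 < 2 * k by omega, if_true, Finset.mem_insert, Finset.mem_singleton] at this
    rw [hstart] at halt
    exact this.resolve_left fun h => hodd (halt.1 h)
  have hend := hL (2 * k) le_rfl
  simp only [pathBlockingLists, show 2 * k ≠ 0 by omega, lt_irrefl, if_false,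
    Finset.mem_insert, Finset.mem_singleton] at hend
  have hlast := hf (hp (2 * k - 1) (by omega))
  rw [Nat.sub_add_cancel (by omega), hpen] at hlast
  have := hf hpz
  omega

end SimpleGraph

open SimpleGraph

def twoEvenCyclesLists (a b i : ℕ) : Finset ℕ :=
  if i = 0 then {1, 2}
  else if i < 2 * a then pathBlockingLists 1 2 3 (a - 1) (i - 1)
  else pathBlockingLists 2 1 3 (b - 1) (i - 2 * a)

theorem twoEvenCyclesLists_card (a b i : ℕ) : (twoEvenCyclesLists a b i).card = 2 := by
  unfold twoEvenCyclesLists pathBlockingLists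
  split_ifs <;> rfl

section twoEvenCycles

variable {a b : ℕ}

theorem twoEvenCyclesLists_succ {i : ℕ} (hi : i + 1 < 2 * a) :
    twoEvenCyclesLists a b (i + 1) = pathBlockingLists 1 2 3 (a - 1) i := by
  simp only [twoEvenCyclesLists, Nat.add_one_ne_zero, if_false, hi, if_true, Nat.add_sub_cancel]

theorem twoEvenCyclesLists_two_mul_add (ha : 0 < a) (i : ℕ) :
    twoEvenCyclesLists a b (2 * a + i) = pathBlockingLists 2 1 3 (b - 1) i := by
  simp only [twoEvenCyclesLists, show 2 * a + i ≠ 0 by omega, show ¬2 * a + i < 2 * a by omega,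
    if_false, Nat.add_sub_cancel_left]

open Fin.NatCast

variable [NeZero (2 * a + 2 * b - 1)]

theorem twoEvenCycles_adj_succ {i : ℕ} (hi : i + 1 < 2 * a + 2 * b - 1) (h : i + 1 ≠ 2 * a) :
    (twoEvenCycles a b).Adj (i : Fin (2 * a + 2 * b - 1))
      ((i + 1 : ℕ) : Fin (2 * a + 2 * b - 1)) := by
  rw [twoEvenCycles, fromRel_adj]
  simp only [ne_eq, Fin.ext_iff, Fin.val_cast_of_lt (by omega : i < 2 * a + 2 * b - 1),
    Fin.val_cast_of_lt hi, true_and]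
  omega

theorem twoEvenCycles_adj_two_mul_sub_one_zero (ha : 0 < a) (hb : 0 < b) :
    (twoEvenCycles a b).Adj ((2 * a - 1 : ℕ) : Fin (2 * a + 2 * b - 1)) 0 := by
  rw [twoEvenCycles, fromRel_adj]
  simp only [ne_eq, Fin.ext_iff, Fin.val_cast_of_lt (by omega : 2 * a - 1 < 2 * a + 2 * b - 1),
    Fin.val_zero, true_and, and_true, true_or, or_true]
  omega

theorem twoEvenCycles_adj_zero_two_mul (ha : 0 < a) (hb : 0 < b) :
    (twoEvenCycles a b).Adj 0 ((2 * a : ℕ) : Fin (2 * a + 2 * b - 1)) := by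
  rw [twoEvenCycles, fromRel_adj]
  simp only [ne_eq, Fin.ext_iff, Fin.val_cast_of_lt (by omega : 2 * a < 2 * a + 2 * b - 1),
    Fin.val_zero, and_true, true_or, or_true]
  omega

theorem twoEvenCycles_adj_last_zero (hab : 1 < a + b) :
    (twoEvenCycles a b).Adj ((2 * a + 2 * b - 2 : ℕ) : Fin (2 * a + 2 * b - 1)) 0 := by
  rw [twoEvenCycles, fromRel_adj]
  simp only [ne_eq, Fin.ext_iff, Fin.val_zero,
    Fin.val_cast_of_lt (by omega : 2 * a + 2 * b - 2 < 2 * a + 2 * b - 1), true_and, and_true,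
    true_or, or_true]
  omega

variable {f : Fin (2 * a + 2 * b - 1) → ℕ}
  (hf : ∀ ⦃u v⦄, (twoEvenCycles a b).Adj u v → f u ≠ f v)
  (hL : ∀ v : Fin (2 * a + 2 * b - 1), f v ∈ twoEvenCyclesLists a b v)
include hf hL

theorem color_zero_ne_one (ha : 2 ≤ a) (hb : 0 < b) : f 0 ≠ 1 :=
  color_ne_of_pathBlockingLists hf (p := fun i => ((i + 1 : ℕ) : Fin (2 * a + 2 * b - 1)))
    (k := a - 1) (by omega)
    (fun i hi => twoEvenCycles_adj_succ (by omega) (by omega))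
    (by simpa using twoEvenCycles_adj_succ (a := a) (b := b) (i := 0) (by omega) (by omega))
    (by simpa [show 2 * (a - 1) + 1 = 2 * a - 1 by omega]
      using twoEvenCycles_adj_two_mul_sub_one_zero (by omega) hb)
    fun i hi => by
      have := hL ((i + 1 : ℕ) : Fin (2 * a + 2 * b - 1))
      rwa [Fin.val_cast_of_lt (by omega), twoEvenCyclesLists_succ (by omega)] at this

theorem color_zero_ne_two (ha : 0 < a) (hb : 2 ≤ b) : f 0 ≠ 2 :=
  color_ne_of_pathBlockingLists hf (p := fun i => ((2 * a + i : ℕ) : Fin (2 * a + 2 * b - 1)))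
    (k := b - 1) (by omega)
    (fun i hi => twoEvenCycles_adj_succ (by omega) (by omega))
    (by simpa using twoEvenCycles_adj_zero_two_mul ha (by omega))
    (by simpa [show 2 * a + 2 * (b - 1) = 2 * a + 2 * b - 2 by omega]
      using twoEvenCycles_adj_last_zero (by omega))
    fun i hi => by
      have := hL ((2 * a + i : ℕ) : Fin (2 * a + 2 * b - 1))
      rwa [Fin.val_cast_of_lt (by omega), twoEvenCyclesLists_two_mul_add ha] at this

end twoEvenCycles

theorem twoEvenCycles_not_two_choosable (a b : ℕ) (ha : 2 ≤ a) (hb : 2 ≤ b) :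
    ¬ Choosable (twoEvenCycles a b) 2 := by
  intro hchoosable
  have : NeZero (2 * a + 2 * b - 1) := ⟨by omega⟩
  obtain ⟨f, hL, hf⟩ := hchoosable (fun v => twoEvenCyclesLists a b v)
    fun v => twoEvenCyclesLists_card a b v
  have hzero : f 0 = 1 ∨ f 0 = 2 := by simpa [twoEvenCyclesLists] using hL 0
  rcases hzero with hone | htwo
  · exact color_zero_ne_one hf hL ha (by omega) hone
  · exact color_zero_ne_two hf hL (by omega) hb htwo
end
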